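/- Let G be a locally compact, second countable, Hausdorff topological group, let L₀ ∈ 𝒞(G) be uniformly separated, and let L ∈ Ξ_{L₀}. Let 𝒢_{L₀} := {(g, L') ∈ G × 𝒞(G) : L' ∈ Ξ_{L₀} and g ∈ L'} with the subspace topology from G × 𝒞(G) (Fell topology on the second factor), and let f : 𝒢_{L₀} → ℂ be continuous with compact support. Then: (i) for every g' ∈ L, the sum Σ_{g ∈ L} f(g'g⁻¹, g·L) φ(g) has only finitely many nonzero terms for every φ : L → ℂ; and (ii) the formula (π_L(f)φ)(g') := Σ_{g ∈ L} f(g'g⁻¹, g·L) φ(g) defines a bounded linear operator π_L(f) on the Hilbert space ℓ²(L) of square-summable complex-valued functions on L. -/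

import Mathlib

open Set Topology Filter

/-- The space of closed subsets of a topological space `X`. -/
structure ClosedSubsets (X : Type*) [TopologicalSpace X] where
  carrier : Set X
  isClosed' : IsClosed carrier

namespace ClosedSubsets

variable {X : Type*} [TopologicalSpace X]

/-- The Fell topology on the space of closed subsets. -/
instance : TopologicalSpace (ClosedSubsets X) :=
  TopologicalSpace.generateFrom
    {U | ∃ (K : Set X) (𝓕 : Set (Set X)), IsCompact K ∧ 𝓕.Finite ∧
      (∀ F ∈ 𝓕, IsOpen F ∧ F.Nonempty) ∧
      U = {Y : ClosedSubsets X | Y.carrier ∩ K = ∅ ∧ ∀ F ∈ 𝓕, (Y.carrier ∩ F).Nonempty}}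

end ClosedSubsets

variable {G : Type*} [Group G] [TopologicalSpace G] [IsTopologicalGroup G]

/-- The right action `g • C = C g⁻¹` of a topological group on its closed subsets. -/
def ClosedSubsets.smul (g : G) (C : ClosedSubsets G) : ClosedSubsets G :=
  ⟨(fun x => x * g⁻¹) '' C.carrier, by
    simpa using (Homeomorph.mulRight g⁻¹).isClosedMap _ C.isClosed'⟩

/-- A closed set `L` is `S`-separated if `|L ∩ g·S| ≤ 1` for all `g`. -/
def SSeparated (S L : Set G) : Prop :=
  ∀ g : G, (L ∩ (fun x => x * g⁻¹) '' S).Subsingleton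

/-- A closed set is uniformly separated if it is `U`-separated for some nonempty open `U`. -/
def UniformlySeparated (L : Set G) : Prop :=
  ∃ U : Set G, IsOpen U ∧ U.Nonempty ∧ SSeparated U L

/-- The hull of `L`: the closure of its orbit in the Fell topology. -/
def hull (L : ClosedSubsets G) : Set (ClosedSubsets G) :=
  closure {C | ∃ g : G, C = ClosedSubsets.smul g L}

/-- The standard transversal of `L`. -/
def transversal (L : ClosedSubsets G) : Set (ClosedSubsets G) :=
  {L' | L' ∈ hull L ∧ (1 : G) ∈ L'.carrier}

/-- The groupoid `𝒢_{L₀}` canonically associated to a pattern `L₀`, as a topological space: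
tuples `(g, L')` with `L' ∈ Ξ_{L₀}` and `g ∈ L'`, topologized as a subspace of `G × 𝒞(G)`
(Fell topology on the second factor). -/
abbrev PatternGroupoid (L₀ : ClosedSubsets G) : Type _ :=
  {p : G × ClosedSubsets G // p.2 ∈ transversal L₀ ∧ p.1 ∈ p.2.carrier}

/-! The kernel `k(g', g) = f(g'g⁻¹, g·L)` is bounded and vanishes unless `g'g⁻¹` lies in the
compact set `K`, the projection of the support of `f` to `G`. Translation preserves
`U`-separation and, for open `U`, `U`-separation is a Fell-closed condition, so `L` is
`U`-separated like `L₀`. Covering `K` by finitely many right translates of `U` then bounds the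
number of points of `L` in any translate of `K`, hence the number of nonzero entries in every
row and column of the kernel, and the Schur test gives a bounded operator on `ℓ²(L)`. -/

open scoped NNReal ENNReal

open Finset in
theorem sq_norm_sum_mul_le_sum_norm_mul {R ι : Type*} [SeminormedRing R] (t : Finset ι)
    (a x : ι → R) :
    ‖∑ j ∈ t, a j * x j‖ ^ 2 ≤ (∑ j ∈ t, ‖a j‖) * ∑ j ∈ t, ‖a j‖ * ‖x j‖ ^ 2 :=
  calc ‖∑ j ∈ t, a j * x j‖ ^ 2 ≤ (∑ j ∈ t, ‖a j‖ * ‖x j‖) ^ 2 := by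
        gcongr
        exact (norm_sum_le _ _).trans (sum_le_sum fun j _ => norm_mul_le _ _)
    _ ≤ (∑ j ∈ t, ‖a j‖) * ∑ j ∈ t, ‖a j‖ * ‖x j‖ ^ 2 :=
        sum_sq_le_sum_mul_sum_of_sq_le_mul t (fun _ _ => by positivity)
          (fun _ _ => by positivity) fun _ _ => le_of_eq (by ring)

open Finset in
theorem sum_sq_norm_sum_mul_le_of_schur {R ι : Type*} [SeminormedRing R] [DecidableEq ι]
    (k : ι → ι → R) (r : ι → Finset ι) (hr : ∀ i j, j ∉ r i → k i j = 0) {A B : ℝ≥0}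
    (hA : ∀ i, ∑ j ∈ r i, ‖k i j‖ ≤ A) (hB : ∀ j (s : Finset ι), ∑ i ∈ s, ‖k i j‖ ≤ B)
    (x : ι → R) (s : Finset ι) :
    ∑ i ∈ s, ‖∑ j ∈ r i, k i j * x j‖ ^ 2 ≤ A * B * ∑ j ∈ s.biUnion r, ‖x j‖ ^ 2 :=
  calc ∑ i ∈ s, ‖∑ j ∈ r i, k i j * x j‖ ^ 2
      ≤ ∑ i ∈ s, A * ∑ j ∈ r i, ‖k i j‖ * ‖x j‖ ^ 2 := by
        gcongr with i
        exact (sq_norm_sum_mul_le_sum_norm_mul _ _ _).trans (by gcongr; exact hA i)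
    _ = A * ∑ i ∈ s, ∑ j ∈ s.biUnion r, ‖k i j‖ * ‖x j‖ ^ 2 := by
        rw [mul_sum]
        refine sum_congr rfl fun i hi => congrArg _ ?_
        refine sum_subset (Finset.subset_biUnion_of_mem r hi) fun j _ hj => ?_
        simp [hr i j hj]
    _ = A * ∑ j ∈ s.biUnion r, (∑ i ∈ s, ‖k i j‖) * ‖x j‖ ^ 2 := by
        rw [sum_comm]
        simp only [sum_mul]
    _ ≤ A * ∑ j ∈ s.biUnion r, B * ‖x j‖ ^ 2 := by
        gcongr with j
        exact hB j s
    _ = A * B * ∑ j ∈ s.biUnion r, ‖x j‖ ^ 2 := by rw [← mul_sum, mul_assoc]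

theorem Finset.sum_norm_le_of_encard_support_le {ι E : Type*} [SeminormedAddCommGroup E]
    {g : ι → E} {n : ℕ} {M : ℝ≥0} (hn : (Function.support g).encard ≤ n)
    (hM : ∀ j, ‖g j‖ ≤ M) (s : Finset ι) : ∑ j ∈ s, ‖g j‖ ≤ n * M := by
  classical
  have hcard : (s.filter (g · ≠ 0)).card ≤ n := by
    have : ((s.filter (g · ≠ 0) : Finset ι) : Set ι).encard ≤ n :=
      (encard_le_encard fun j hj => by simp_all).trans hn
    rwa [encard_coe_eq_coe_finsetCard, Nat.cast_le] at this
  calc ∑ j ∈ s, ‖g j‖ = ∑ j ∈ s.filter (g · ≠ 0), ‖g j‖ :=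
        (Finset.sum_filter_of_ne fun j _ hj => by contrapose! hj; simp [hj]).symm
    _ ≤ (s.filter (g · ≠ 0)).card • (M : ℝ) := Finset.sum_le_card_nsmul _ _ _ fun j _ => hM j
    _ ≤ n * M := by rw [nsmul_eq_mul]; gcongr

theorem exists_lp_two_clm_apply_eq_tsum_of_schur {𝕜 ι : Type*} [NormedField 𝕜]
    (k : ι → ι → 𝕜) (hfin : ∀ i, (Function.support (k i)).Finite) {A B : ℝ≥0}
    (hA : ∀ i (s : Finset ι), ∑ j ∈ s, ‖k i j‖ ≤ A)
    (hB : ∀ j (s : Finset ι), ∑ i ∈ s, ‖k i j‖ ≤ B) :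
    ∃ T : lp (fun _ : ι => 𝕜) 2 →L[𝕜] lp (fun _ : ι => 𝕜) 2,
      ∀ φ i, T φ i = ∑' j, k i j * φ j := by
  classical
  set r : ι → Finset ι := fun i => (hfin i).toFinset
  have hr : ∀ i j, j ∉ r i → k i j = 0 := by simp [r]
  have hsq : ∀ (φ : lp (fun _ : ι => 𝕜) 2) (s : Finset ι),
      ∑ i ∈ s, ‖∑ j ∈ r i, k i j * φ j‖ ^ (2 : ℝ≥0∞).toReal
        ≤ (NNReal.sqrt (A * B) * ‖φ‖) ^ (2 : ℝ≥0∞).toReal := by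
    intro φ s
    have hφ := lp.sum_rpow_le_norm_rpow (by norm_num) φ (s.biUnion r)
    simp only [ENNReal.toReal_ofNat, Real.rpow_two] at hφ ⊢
    calc ∑ i ∈ s, ‖∑ j ∈ r i, k i j * φ j‖ ^ 2
        ≤ A * B * ∑ j ∈ s.biUnion r, ‖φ j‖ ^ 2 :=
          sum_sq_norm_sum_mul_le_of_schur k r hr (fun i => hA i (r i)) hB _ s
      _ ≤ A * B * ‖φ‖ ^ 2 := by gcongr
      _ = (NNReal.sqrt (A * B) * ‖φ‖) ^ 2 := by
          rw [mul_pow, ← NNReal.coe_pow, NNReal.sq_sqrt, NNReal.coe_mul]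
  let T : lp (fun _ : ι => 𝕜) 2 →ₗ[𝕜] lp (fun _ : ι => 𝕜) 2 :=
    { toFun φ := ⟨fun i => ∑ j ∈ r i, k i j * φ j, memℓp_gen' (hsq φ)⟩
      map_add' φ ψ := by ext i; simp [mul_add, Finset.sum_add_distrib]; rfl
      map_smul' c φ := by ext i; simp [Finset.mul_sum, mul_left_comm] }
  refine ⟨T.mkContinuous _ fun φ => lp.norm_le_of_forall_sum_le (by norm_num) (by positivity)
    (hsq φ), fun φ i => (tsum_eq_sum fun j hj => by simp [hr i j hj]).symm⟩

theorem ClosedSubsets.isOpen_setOf_inter_nonempty {X : Type*} [TopologicalSpace X] {F : Set X}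
    (hF : IsOpen F) : IsOpen {Y : ClosedSubsets X | (Y.carrier ∩ F).Nonempty} := by
  rcases F.eq_empty_or_nonempty with rfl | hne
  · simp
  refine TopologicalSpace.isOpen_generateFrom_of_mem
    ⟨∅, {F}, isCompact_empty, finite_singleton F, by simp [hF, hne], ?_⟩
  ext Y
  simp

theorem SSeparated.image_mul_right {G : Type*} [Group G] {U L : Set G} (hsep : SSeparated U L)
    (h : G) : SSeparated U ((· * h) '' L) := by
  intro g
  have := (hsep (h * g)).image (· * h)
  rw [image_inter (mul_left_injective h), image_image] at this
  convert this using 3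
  group

theorem isClosed_setOf_sseparated [T2Space G] {U : Set G} (hU : IsOpen U) :
    IsClosed {L : ClosedSubsets G | SSeparated U L.carrier} := by
  refine isOpen_compl_iff.mp (isOpen_iff_forall_mem_open.mpr fun L hL => ?_)
  obtain ⟨g, x, ⟨hxL, hxU⟩, y, ⟨hyL, hyU⟩, hxy⟩ :
      ∃ g, (L.carrier ∩ (· * g⁻¹) '' U).Nontrivial := by
    simpa [SSeparated, not_subsingleton_iff] using hL
  obtain ⟨A, B, hA, hB, hxA, hyB, hAB⟩ := t2_separation hxy
  have hUg : IsOpen ((· * g⁻¹) '' U) := (Homeomorph.mulRight g⁻¹).isOpenMap U hU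
  refine ⟨{Y | (Y.carrier ∩ (A ∩ (· * g⁻¹) '' U)).Nonempty} ∩
      {Y | (Y.carrier ∩ (B ∩ (· * g⁻¹) '' U)).Nonempty}, ?_,
    ((ClosedSubsets.isOpen_setOf_inter_nonempty (hA.inter hUg)).inter
      (ClosedSubsets.isOpen_setOf_inter_nonempty (hB.inter hUg))),
    ⟨⟨x, hxL, hxA, hxU⟩, ⟨y, hyL, hyB, hyU⟩⟩⟩
  rintro Y ⟨⟨a, haY, haA, haU⟩, ⟨b, hbY, hbB, hbU⟩⟩ hsep
  exact hAB.ne_of_mem haA hbB (hsep g ⟨haY, haU⟩ ⟨hbY, hbU⟩)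

theorem SSeparated.of_mem_hull [T2Space G] {U : Set G} (hU : IsOpen U) {L₀ L : ClosedSubsets G}
    (hsep : SSeparated U L₀.carrier) (hL : L ∈ hull L₀) : SSeparated U L.carrier :=
  closure_minimal (by rintro _ ⟨g, rfl⟩; exact hsep.image_mul_right g⁻¹)
    (isClosed_setOf_sseparated hU) hL

theorem SSeparated.exists_encard_inter_image_mul_le {U : Set G} (hU : IsOpen U)
    (hne : U.Nonempty) {L K : Set G} (hsep : SSeparated U L) (hK : IsCompact K) :
    ∃ n : ℕ, ∀ h : G, (L ∩ (· * h) '' K).encard ≤ n := by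
  obtain ⟨u, hu⟩ := hne
  obtain ⟨t, ht⟩ := hK.elim_finite_subcover (fun c : G => (· * c) '' U)
    (fun c => (Homeomorph.mulRight c).isOpenMap U hU)
    fun x _ => mem_iUnion.mpr ⟨u⁻¹ * x, u, hu, by group⟩
  refine ⟨t.card, fun h => ?_⟩
  calc (L ∩ (· * h) '' K).encard ≤ (⋃ c ∈ t, L ∩ (· * (c * h)) '' U).encard := by
        refine encard_le_encard ?_
        rintro _ ⟨hzL, x, hxK, rfl⟩
        obtain ⟨c, hc, v, hv, rfl⟩ := mem_iUnion₂.mp (ht hxK)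
        exact mem_iUnion₂.mpr ⟨c, hc, hzL, v, hv, by group⟩
    _ ≤ ∑ c ∈ t, (L ∩ (· * (c * h)) '' U).encard := t.set_encard_biUnion_le _
    _ ≤ ∑ _c ∈ t, 1 := Finset.sum_le_sum fun c _ =>
        encard_le_one_iff_subsingleton.mpr (inv_inv (c * h) ▸ hsep (c * h)⁻¹)
    _ = t.card := by simp

theorem leftRegularRep_finite_and_bounded_general (G : Type*) [Group G] [TopologicalSpace G]
    [IsTopologicalGroup G] [T2Space G]
    (L₀ : ClosedSubsets G) (hsep : UniformlySeparated L₀.carrier)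
    (L : ClosedSubsets G) (hL : L ∈ transversal L₀)
    (hmem : ∀ g ∈ L.carrier, ClosedSubsets.smul g L ∈ transversal L₀)
    (f : PatternGroupoid L₀ → ℂ) (hfcont : Continuous f) (hfsupp : HasCompactSupport f) :
    (∀ (g' : G) (hg' : g' ∈ L.carrier) (φ : ↥L.carrier → ℂ),
      {g : ↥L.carrier |
        f ⟨(g' * (g.1)⁻¹, ClosedSubsets.smul g.1 L), hmem g.1 g.2, ⟨g', hg', rfl⟩⟩ * φ g
          ≠ 0}.Finite) ∧
    (∃ T : lp (fun _ : ↥L.carrier => ℂ) 2 →L[ℂ] lp (fun _ : ↥L.carrier => ℂ) 2,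
      ∀ (φ : lp (fun _ : ↥L.carrier => ℂ) 2) (g' : ↥L.carrier),
        T φ g' = ∑' g : ↥L.carrier,
          f ⟨(g'.1 * (g.1)⁻¹, ClosedSubsets.smul g.1 L), hmem g.1 g.2, ⟨g'.1, g'.2, rfl⟩⟩
            * φ g) := by
  obtain ⟨U, hU, hUne, hUsep⟩ := hsep
  have hLsep : SSeparated U L.carrier := hUsep.of_mem_hull hU hL.1
  set K : Set G := (fun p : PatternGroupoid L₀ => p.1.1) '' tsupport f
  have hK : IsCompact K := hfsupp.image (continuous_fst.comp continuous_subtype_val)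
  obtain ⟨M, hM⟩ := hfcont.bounded_above_of_compact_support hfsupp
  lift M to ℝ≥0 using (norm_nonneg _).trans (hM ⟨(1, L), hL, hL.2⟩)
  set k : L.carrier → L.carrier → ℂ := fun g' g =>
    f ⟨(g'.1 * g.1⁻¹, ClosedSubsets.smul g.1 L), hmem g.1 g.2, ⟨g'.1, g'.2, rfl⟩⟩
  have hkK : ∀ i j, k i j ≠ 0 → i.1 * j.1⁻¹ ∈ K := fun i j h => ⟨_, subset_tsupport f h, rfl⟩
  obtain ⟨n, hn⟩ := hLsep.exists_encard_inter_image_mul_le hU hUne hK.inv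
  obtain ⟨m, hm⟩ := hLsep.exists_encard_inter_image_mul_le hU hUne hK
  have hrow : ∀ i, (Function.support (k i)).encard ≤ n := fun i => by
    refine (Subtype.val_injective.encard_image _).symm.trans_le
      ((encard_le_encard ?_).trans (hn i))
    rintro _ ⟨j, hj, rfl⟩
    exact ⟨j.2, (i.1 * j.1⁻¹)⁻¹, by simpa using hkK i j hj, by group⟩
  have hcol : ∀ j, (Function.support fun i => k i j).encard ≤ m := fun j => by
    refine (Subtype.val_injective.encard_image _).symm.trans_le
      ((encard_le_encard ?_).trans (hm j))
    rintro _ ⟨i, hi, rfl⟩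
    exact ⟨i.2, i.1 * j.1⁻¹, hkK i j hi, by group⟩
  have hfin : ∀ i, (Function.support (k i)).Finite := fun i => finite_of_encard_le_coe (hrow i)
  refine ⟨fun g' hg' φ => (hfin ⟨g', hg'⟩).subset fun g hg => left_ne_zero_of_mul hg,
    exists_lp_two_clm_apply_eq_tsum_of_schur k hfin (A := n * M) (B := m * M) ?_ ?_⟩
  · exact fun i s => by simpa using s.sum_norm_le_of_encard_support_le (hrow i) (fun j => hM _)
  · exact fun j s => by simpa using s.sum_norm_le_of_encard_support_le (hcol j) (fun i => hM _)

/-- Let `L₀` be uniformly separated, `L ∈ Ξ_{L₀}` and `f : 𝒢_{L₀} → ℂ`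
continuous with compact support.  Then (i) for every `g' ∈ L` and any `φ : L → ℂ`, the sum
`Σ_{g ∈ L} f(g'g⁻¹, g·L) φ(g)` has only finitely many nonzero terms; and (ii) this formula
defines a bounded linear operator on the Hilbert space `ℓ²(L)`.  (The hypothesis `hmem`, which
records the true fact that `g·L ∈ Ξ_{L₀}` for `g ∈ L`, is quantified so that the arguments of
`f` can be written down.) -/
theorem leftRegularRep_finite_and_bounded (G : Type*) [Group G] [TopologicalSpace G]
    [IsTopologicalGroup G] [LocallyCompactSpace G] [SecondCountableTopology G] [T2Space G]
    (L₀ : ClosedSubsets G) (hsep : UniformlySeparated L₀.carrier)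
    (L : ClosedSubsets G) (hL : L ∈ transversal L₀)
    (hmem : ∀ g ∈ L.carrier, ClosedSubsets.smul g L ∈ transversal L₀)
    (f : PatternGroupoid L₀ → ℂ) (hfcont : Continuous f) (hfsupp : HasCompactSupport f) :
    (∀ (g' : G) (hg' : g' ∈ L.carrier) (φ : ↥L.carrier → ℂ),
      {g : ↥L.carrier |
        f ⟨(g' * (g.1)⁻¹, ClosedSubsets.smul g.1 L), hmem g.1 g.2, ⟨g', hg', rfl⟩⟩ * φ g
          ≠ 0}.Finite) ∧
    (∃ T : lp (fun _ : ↥L.carrier => ℂ) 2 →L[ℂ] lp (fun _ : ↥L.carrier => ℂ) 2,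
      ∀ (φ : lp (fun _ : ↥L.carrier => ℂ) 2) (g' : ↥L.carrier),
        T φ g' = ∑' g : ↥L.carrier,
          f ⟨(g'.1 * (g.1)⁻¹, ClosedSubsets.smul g.1 L), hmem g.1 g.2, ⟨g'.1, g'.2, rfl⟩⟩
            * φ g) :=
  leftRegularRep_finite_and_bounded_general G L₀ hsep L hL hmem f hfcont hfsupp
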